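/- Let T be a lexicographically ordered ω₁-tree and L ⊆ 𝓑(T). Then for every cofinal branch b ∈ 𝓑(T), the set {q ∈ R_L : b ∈ Z_q or b ∩ A_q ≠ ∅} is dense in R_L, i.e., every condition of R_L has an extension in this set. -/

import Mathlib

noncomputable section

open Cardinal Set

def omega1 : Ordinal := (Cardinal.aleph 1).ord

def omega2 : Ordinal := (Cardinal.aleph 2).ord

/-- The height of an element `t`: the order type of its set of strict predecessors. -/
def htOf {X : Type} (lt : X → X → Prop)
    (wo : ∀ t : X, IsWellOrder {s : X // lt s t} fun a b => lt a.1 b.1) (t : X) : Ordinal :=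
  @Ordinal.type {s : X // lt s t} (fun a b => lt a.1 b.1) (wo t)

/-- A lexicographically ordered (normal) `ω₁`-tree. -/
structure LexOmega1Tree where
  T : Type
  lt : T → T → Prop
  lt_irrefl : ∀ a : T, ¬ lt a a
  lt_trans : ∀ {a b c : T}, lt a b → lt b c → lt a c
  /-- the strict predecessors of any element are well-ordered -/
  predWO : ∀ t : T, IsWellOrder {s : T // lt s t} fun a b => lt a.1 b.1
  /-- every level is countable -/
  level_countable : ∀ α : Ordinal, {t : T | htOf lt predWO t = α}.Countable
  /-- levels are nonempty exactly below `ω₁` -/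
  level_nonempty : ∀ α : Ordinal, (∃ t : T, htOf lt predWO t = α) ↔ α < omega1
  /-- normality: distinct elements of the same limit height have different predecessors -/
  normal : ∀ s t : T, htOf lt predWO s = htOf lt predWO t →
    Order.IsSuccLimit (htOf lt predWO s) → (∀ u : T, lt u s ↔ lt u t) → s = t
  /-- the lexicographic comparison of distinct elements of equal height -/
  lexlt : T → T → Prop
  lexlt_same : ∀ a b : T, lexlt a b → htOf lt predWO a = htOf lt predWO b ∧ a ≠ b
  lexlt_tricho : ∀ a b : T, htOf lt predWO a = htOf lt predWO b → a ≠ b →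
    lexlt a b ∨ lexlt b a
  lexlt_asymm : ∀ a b : T, lexlt a b → ¬ lexlt b a
  lexlt_trans : ∀ {a b c : T}, lexlt a b → lexlt b c → lexlt a c
  /-- coherence: the lexicographic comparison is decided at the splitting level -/
  lexlt_coh : ∀ a b a' b' : T, lexlt a b → lt a a' → lt b b' →
    htOf lt predWO a' = htOf lt predWO b' → lexlt a' b'

namespace LexOmega1Tree

variable (S : LexOmega1Tree)

def ht : S.T → Ordinal := htOf S.lt S.predWO

def le (a b : S.T) : Prop := S.lt a b ∨ a = b

/-- a cofinal branch : a downward closed chain meeting every level -/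
def IsBranch (b : Set S.T) : Prop :=
  (∀ s t : S.T, t ∈ b → S.lt s t → s ∈ b) ∧
  (∀ s t : S.T, s ∈ b → t ∈ b → s = t ∨ S.lt s t ∨ S.lt t s) ∧
  (∀ α : Ordinal, α < omega1 → ∃ t ∈ b, S.ht t = α)

/-- the set `𝓑(T)` of cofinal branches -/
def Branch : Type := {b : Set S.T // S.IsBranch b}

/-- the lexicographic order on branches (and on arbitrary sets of nodes) -/
def blex (A B : Set S.T) : Prop := ∃ a ∈ A, ∃ b ∈ B, S.lexlt a b

/-- the order topology on `(𝓑(T), <lex)`, generated by the open rays -/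
def branchTop : TopologicalSpace S.Branch :=
  TopologicalSpace.generateFrom
    {s : Set S.Branch | ∃ a : S.Branch, s = {x | S.blex a.1 x.1} ∨ s = {x | S.blex x.1 a.1}}

/-- `b` is a local right end point of the downward closed subtree `W` -/
def IsLocalRightEP (W b : Set S.T) : Prop :=
  ∃ t ∈ b, ∀ s ∈ b, S.ht t ≤ S.ht s →
    ∀ u ∈ W, S.ht u = S.ht s → S.le t u → u = s ∨ S.lexlt u s

/-- `b` is a local left end point of the downward closed subtree `W` -/
def IsLocalLeftEP (W b : Set S.T) : Prop :=
  ∃ t ∈ b, ∀ s ∈ b, S.ht t ≤ S.ht s →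
    ∀ u ∈ W, S.ht u = S.ht s → S.le t u → u = s ∨ S.lexlt s u

def IsLocalEP (W b : Set S.T) : Prop := S.IsLocalRightEP W b ∨ S.IsLocalLeftEP W b

end LexOmega1Tree

/-- A condition `p = (Z_p, A_p)` of the poset `R_L`: `Z_p ⊆ L` is countable, nonempty,
and disjoint from the set of local end points of `⋃L`; `A_p` is a countable antichain
of `T` disjoint from `⋃Z_p`. -/
structure RCond (S : LexOmega1Tree) (L : Set (Set S.T)) where
  Z : Set (Set S.T)
  A : Set S.T
  Z_sub : Z ⊆ L
  Z_countable : Z.Countable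
  Z_nonempty : Z.Nonempty
  Z_noEP : ∀ b ∈ Z, ¬ S.IsLocalEP {t : S.T | ∃ c ∈ L, t ∈ c} b
  A_countable : A.Countable
  A_antichain : ∀ a ∈ A, ∀ b ∈ A, a ≠ b → ¬ S.lt a b ∧ ¬ S.lt b a
  A_disj : ∀ t ∈ A, ∀ b ∈ Z, t ∉ b

/-- `RCond.le q p` means `q ≤ p`, i.e. `q` extends `p`. -/
def RCond.le {S : LexOmega1Tree} {L : Set (Set S.T)} (q p : RCond S L) : Prop :=
  p.Z ⊆ q.Z ∧ p.A ⊆ q.A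

/-! Suppose `b ∉ Z_p` and `b` misses `A_p`. Each branch `c ∈ Z_p` differs from `b`, so some node
of `b` lies outside `c`. These countably many nodes, together with `A_p`, have heights bounded
below `ω₁`, so `b` has a node `t` above all of them. Then `t` lies on no branch of `Z_p` and is
incomparable with every element of `A_p`, and adding `t` to `A_p` gives the required extension. -/

namespace LexOmega1Tree

variable (S : LexOmega1Tree)

lemma ht_lt_of_lt {s t : S.T} (h : S.lt s t) : S.ht s < S.ht t := by
  have := S.predWO t
  have := S.predWO s
  have hs : S.ht s = Ordinal.typein (fun a b : {x // S.lt x t} => S.lt a.1 b.1) ⟨s, h⟩ := by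
    rw [← Ordinal.type_subrel]
    exact Ordinal.type_eq.2 ⟨⟨⟨fun u => ⟨⟨u.1, S.lt_trans u.2 h⟩, u.2⟩,
      fun x => ⟨x.1.1, x.2⟩, fun u => rfl, fun x => rfl⟩, Iff.rfl⟩⟩
  rw [hs]
  exact Ordinal.typein_lt_type _ _

lemma ht_lt_omega1 (t : S.T) : S.ht t < omega1 :=
  (S.level_nonempty (S.ht t)).1 ⟨t, rfl⟩

variable {S}

namespace IsBranch

variable {b c : Set S.T}

lemma eq_of_ht_eq (hb : S.IsBranch b) {x y : S.T} (hx : x ∈ b) (hy : y ∈ b)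
    (h : S.ht x = S.ht y) : x = y := by
  rcases hb.2.1 x y hx hy with hxy | hxy | hxy
  · exact hxy
  · exact absurd h (S.ht_lt_of_lt hxy).ne
  · exact absurd h (S.ht_lt_of_lt hxy).ne'

lemma eq_of_subset (hb : S.IsBranch b) (hc : S.IsBranch c) (h : b ⊆ c) : b = c := by
  refine h.antisymm fun x hx => ?_
  obtain ⟨y, hyb, hy⟩ := hb.2.2 (S.ht x) (S.ht_lt_omega1 x)
  rwa [hc.eq_of_ht_eq hx (h hyb) hy.symm]

lemma exists_mem_notMem (hb : S.IsBranch b) (hc : S.IsBranch c) (hne : b ≠ c) :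
    ∃ s ∈ b, s ∉ c :=
  not_subset.1 fun h => hne (hb.eq_of_subset hc h)

lemma mem_of_ht_le (hb : S.IsBranch b) (hc : S.IsBranch c) {s t : S.T} (hs : s ∈ b)
    (ht : t ∈ b) (hle : S.ht s ≤ S.ht t) (htc : t ∈ c) : s ∈ c := by
  rcases hb.2.1 s t hs ht with rfl | hst | hts
  · exact htc
  · exact hc.1 s t htc hst
  · exact absurd hle (S.ht_lt_of_lt hts).not_ge

lemma exists_mem_forall_ht_lt (hb : S.IsBranch b) {N : Set S.T} (hN : N.Countable) :
    ∃ t ∈ b, ∀ x ∈ N, S.ht x < S.ht t := by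
  have : Countable N := hN.to_subtype
  have hsup : ⨆ x : N, S.ht x < Ordinal.omega 1 :=
    Ordinal.iSup_lt_omega_one fun x => ord_aleph 1 ▸ S.ht_lt_omega1 x
  obtain ⟨t, htb, htα⟩ := hb.2.2 _ (ord_aleph 1 ▸ (isSuccLimit_omega 1).succ_lt hsup)
  refine ⟨t, htb, fun x hx => ?_⟩
  rw [htα, Order.lt_succ_iff]
  exact Ordinal.le_iSup (fun x : N => S.ht x) ⟨x, hx⟩

end IsBranch

end LexOmega1Tree

namespace RCond

variable {S : LexOmega1Tree} {L : Set (Set S.T)}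

lemma le_refl (p : RCond S L) : p.le p := ⟨subset_rfl, subset_rfl⟩

def insertA (p : RCond S L) (t : S.T) (hinc : ∀ a ∈ p.A, ¬ S.lt a t ∧ ¬ S.lt t a)
    (hZ : ∀ c ∈ p.Z, t ∉ c) : RCond S L where
  Z := p.Z
  A := insert t p.A
  Z_sub := p.Z_sub
  Z_countable := p.Z_countable
  Z_nonempty := p.Z_nonempty
  Z_noEP := p.Z_noEP
  A_countable := p.A_countable.insert t
  A_antichain := by
    rintro a (rfl | ha) a' (rfl | ha') hne
    · exact absurd rfl hne
    · exact (hinc a' ha').symm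
    · exact hinc a ha
    · exact p.A_antichain a ha a' ha' hne
  A_disj := by
    rintro u (rfl | hu)
    exacts [hZ, p.A_disj u hu]

lemma le_insertA (p : RCond S L) (t : S.T) (hinc : ∀ a ∈ p.A, ¬ S.lt a t ∧ ¬ S.lt t a)
    (hZ : ∀ c ∈ p.Z, t ∉ c) : (p.insertA t hinc hZ).le p :=
  ⟨subset_rfl, subset_insert t p.A⟩

end RCond

/-- For every cofinal branch `b ∈ 𝓑(T)`, the set of conditions
`q ∈ R_L` with `b ∈ Z_q` or `b ∩ A_q ≠ ∅` is dense in `R_L`. -/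
theorem stmt10 (S : LexOmega1Tree) (L : Set (Set S.T)) (hL : ∀ b ∈ L, S.IsBranch b)
    (b : Set S.T) (hb : S.IsBranch b) (p : RCond S L) :
    ∃ q : RCond S L, RCond.le q p ∧ (b ∈ q.Z ∨ ∃ t ∈ q.A, t ∈ b) := by
  by_cases hbZ : b ∈ p.Z
  · exact ⟨p, p.le_refl, Or.inl hbZ⟩
  by_cases hbA : ∃ t ∈ p.A, t ∈ b
  · exact ⟨p, p.le_refl, Or.inr hbA⟩
  push Not at hbA
  have hsplit : ∀ c : p.Z, ∃ s ∈ b, s ∉ c.1 := fun c =>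
    hb.exists_mem_notMem (hL c (p.Z_sub c.2)) fun h => hbZ (h ▸ c.2)
  choose w hwb hwc using hsplit
  have : Countable p.Z := p.Z_countable.to_subtype
  obtain ⟨t, htb, hlt⟩ := hb.exists_mem_forall_ht_lt (p.A_countable.union (countable_range w))
  have hinc : ∀ a ∈ p.A, ¬ S.lt a t ∧ ¬ S.lt t a := fun a ha =>
    ⟨fun h => hbA a ha (hb.1 a t htb h),
      fun h => (S.ht_lt_of_lt h).not_gt (hlt a (.inl ha))⟩
  have havoid : ∀ c ∈ p.Z, t ∉ c := fun c hc htc =>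
    hwc ⟨c, hc⟩ (hb.mem_of_ht_le (hL c (p.Z_sub hc)) (hwb _) htb
      (hlt _ (.inr ⟨_, rfl⟩)).le htc)
  exact ⟨p.insertA t hinc havoid, p.le_insertA t hinc havoid, Or.inr ⟨t, mem_insert t _, htb⟩⟩
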